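/- Let N > 2r and let A be an invertible N×N complex matrix with A(i,j) = 0 whenever |i−j| > r. Suppose A = U·R where R is an invertible upper triangular matrix with R(i,j) = 0 for j − i > 2r, and U = Ũ_1·Ũ_2⋯Ũ_{N−r+1} (increasing order) with embedded factors built from unitary matrices U_k ∈ ℂ^{(r+1)×(r+1)} (k = 1,…,N−r) and a unitary U_{N−r+1} ∈ ℂ^{r×r}. Partition U_k^* = [[p_U(k), d_U(k)],[a_U(k), q_U(k)]] (blocks of sizes 1×r, 1×1, r×r, r×1). Set x_k = R(k,k) for all k and X̃_k = R(k, k+1:k+2r) for k = 1,…,N−2r. Define q(k) = q_U(k) and a(k) = a_U(k) for k = 1,…,N−r. Set P_{N−r+1} = (R(N−r+1:N, N−r+1:N))⁻¹·U_{N−r+1}^*; for k = N−r,…,N−2r+1 set p(k) = (1/x_k)·(p_U(k) − R(k,k+1:N)·P_{k+1}·a(k)) and P_k = (p(k); P_{k+1}·a(k)); set t_{N−2r+1} = P_{N−2r+1}; and for k = N−2r,…,1 set p(k) = (1/x_k)·(p_U(k) − X̃_k·t_{k+1}·a(k)) and t_k = (p(k); t_{k+1}(1:2r−1, :)·a(k)).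 Then p(i), q(i), a(i) (i = 1,…,N−r) together with p(N−r+1) := P_{N−r+1} are lower Green generators of A⁻¹. -/
import Mathlib


open Matrix

noncomputable section

/-- `A(i,j) = 0` whenever `i - j > r` (1-based; identical in 0-based `Fin` indexing). -/
def IsLowerBand (N r : ℕ) (A : Matrix (Fin N) (Fin N) ℂ) : Prop :=
  ∀ i j : Fin N, (j : ℕ) + r < (i : ℕ) → A i j = 0

/-- `A(i,j) = 0` whenever `j - i > r`. -/
def IsUpperBand (N r : ℕ) (A : Matrix (Fin N) (Fin N) ℂ) : Prop :=
  ∀ i j : Fin N, (i : ℕ) + r < (j : ℕ) → A i j = 0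

/-- `rank B(k:N, 1:k+r-1) ≤ r` for every `k = 1, …, N-r` (1-based). -/
def IsLowerGreen (N r : ℕ) (B : Matrix (Fin N) (Fin N) ℂ) : Prop :=
  ∀ (k : ℕ) (hk1 : 1 ≤ k) (hk2 : k ≤ N - r),
    (B.submatrix
      (fun i : Fin (N - k + 1) => (⟨k - 1 + (i : ℕ), by have := i.isLt; omega⟩ : Fin N))
      (fun j : Fin (k + r - 1) => (⟨(j : ℕ), by have := j.isLt; omega⟩ : Fin N))).rank ≤ r

/-- `rank B(1:k+r-1, k:N) ≤ r` for every `k = 1, …, N-r` (1-based). -/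
def IsUpperGreen (N r : ℕ) (B : Matrix (Fin N) (Fin N) ℂ) : Prop :=
  ∀ (k : ℕ) (hk1 : 1 ≤ k) (hk2 : k ≤ N - r),
    (B.submatrix
      (fun i : Fin (k + r - 1) => (⟨(i : ℕ), by have := i.isLt; omega⟩ : Fin N))
      (fun j : Fin (N - k + 1) => (⟨k - 1 + (j : ℕ), by have := j.isLt; omega⟩ : Fin N))).rank ≤ r

/-- `a^>_{i,s} = a(i-1) a(i-2) ⋯ a(s+1)`, equal to `I_r` when `s ≥ i - 1`. -/
def aGT (r : ℕ) (a : ℕ → Matrix (Fin r) (Fin r) ℂ) (i s : ℕ) :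
    Matrix (Fin r) (Fin r) ℂ :=
  (((List.range' (s + 1) (i - 1 - s)).reverse).map a).prod

/-- `p(i) ∈ ℂ^{1×r}` (i = 1,…,N−r), `pLast = p(N−r+1) ∈ ℂ^{r×r}`, `q(j) ∈ ℂ^{r×1}`,
`a(k) ∈ ℂ^{r×r}` are lower Green generators of the `N×N` matrix `B`:
`B(i,1:r) = p(i)·a^>_{i,0}`, `B(i,r+s-1) = p(i)·a^>_{i,s-1}·q(s-1)` for `2 ≤ s ≤ i ≤ N-r`,
and the analogous identities for the last `r` rows `B(N-r+1:N, ·)` with `pLast`. -/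
def IsLowerGreenGenerators (N r : ℕ) (hNr : r < N)
    (p : ℕ → Matrix (Fin 1) (Fin r) ℂ) (q : ℕ → Matrix (Fin r) (Fin 1) ℂ)
    (a : ℕ → Matrix (Fin r) (Fin r) ℂ) (pLast : Matrix (Fin r) (Fin r) ℂ)
    (B : Matrix (Fin N) (Fin N) ℂ) : Prop :=
  (∀ (i : ℕ) (hi1 : 1 ≤ i) (hi2 : i ≤ N - r) (j : Fin r),
      B ⟨i - 1, by omega⟩ ⟨(j : ℕ), by have := j.isLt; omega⟩ = (p i * aGT r a i 0) 0 j)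
  ∧ (∀ (i : ℕ) (hi1 : 1 ≤ i) (hi2 : i ≤ N - r) (s : ℕ) (hs1 : 2 ≤ s) (hs2 : s ≤ i),
      B ⟨i - 1, by omega⟩ ⟨r + s - 2, by omega⟩
        = (p i * aGT r a i (s - 1) * q (s - 1)) 0 0)
  ∧ (∀ (t : Fin r) (j : Fin r),
      B ⟨N - r + (t : ℕ), by have := t.isLt; omega⟩ ⟨(j : ℕ), by have := j.isLt; omega⟩
        = (pLast * aGT r a (N - r + 1) 0) t j)
  ∧ (∀ (t : Fin r) (s : ℕ) (hs1 : 2 ≤ s) (hs2 : s ≤ N - r + 1),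
      B ⟨N - r + (t : ℕ), by have := t.isLt; omega⟩ ⟨r + s - 2, by omega⟩
        = (pLast * aGT r a (N - r + 1) (s - 1) * q (s - 1)) t 0)

/-- The embedded factor `I_{k-1} ⊕ M ⊕ I_{N-k-r}` (1-based block position `k`),
i.e. `M` occupies (1-based) rows and columns `k, …, k+r` of an `N×N` identity. -/
def embed (N r k : ℕ) (M : Matrix (Fin (r + 1)) (Fin (r + 1)) ℂ) :
    Matrix (Fin N) (Fin N) ℂ :=
  Matrix.of fun i j =>
    if h : k - 1 ≤ (i : ℕ) ∧ (i : ℕ) < k + r ∧ k - 1 ≤ (j : ℕ) ∧ (j : ℕ) < k + r then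
      M ⟨(i : ℕ) - (k - 1), by omega⟩ ⟨(j : ℕ) - (k - 1), by omega⟩
    else if (i : ℕ) = (j : ℕ) then 1 else 0

/-- The embedded last factor `I_{N-r} ⊕ M`. -/
def embedLast (N r : ℕ) (M : Matrix (Fin r) (Fin r) ℂ) : Matrix (Fin N) (Fin N) ℂ :=
  Matrix.of fun i j =>
    if h : N - r ≤ (i : ℕ) ∧ N - r ≤ (j : ℕ) then
      M ⟨(i : ℕ) - (N - r), by have := i.isLt; omega⟩
        ⟨(j : ℕ) - (N - r), by have := j.isLt; omega⟩
    else if (i : ℕ) = (j : ℕ) then 1 else 0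

/-- `G̃_1 · G̃_2 ⋯ G̃_{N-r}` (increasing order of indices). -/
def prodAsc (N r : ℕ) (G : ℕ → Matrix (Fin (r + 1)) (Fin (r + 1)) ℂ) :
    Matrix (Fin N) (Fin N) ℂ :=
  ((List.range' 1 (N - r)).map (fun k => embed N r k (G k))).prod

/-- `G̃_{N-r} · G̃_{N-r-1} ⋯ G̃_1` (decreasing order of indices). -/
def prodDesc (N r : ℕ) (G : ℕ → Matrix (Fin (r + 1)) (Fin (r + 1)) ℂ) :
    Matrix (Fin N) (Fin N) ℂ :=
  (((List.range' 1 (N - r)).reverse).map (fun k => embed N r k (G k))).prod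

/-- The `1×r` block `p` of the partition `M = [[p, d], [a, q]]`. -/
def blkP (r : ℕ) (M : Matrix (Fin (r + 1)) (Fin (r + 1)) ℂ) : Matrix (Fin 1) (Fin r) ℂ :=
  Matrix.of fun _ j => M 0 j.castSucc

/-- The `1×1` block `d` of the partition `M = [[p, d], [a, q]]`. -/
def blkD (r : ℕ) (M : Matrix (Fin (r + 1)) (Fin (r + 1)) ℂ) : ℂ := M 0 (Fin.last r)

/-- The `r×r` block `a` of the partition `M = [[p, d], [a, q]]`. -/
def blkA (r : ℕ) (M : Matrix (Fin (r + 1)) (Fin (r + 1)) ℂ) : Matrix (Fin r) (Fin r) ℂ :=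
  Matrix.of fun i j => M i.succ j.castSucc

/-- The `r×1` block `q` of the partition `M = [[p, d], [a, q]]`. -/
def blkQ (r : ℕ) (M : Matrix (Fin (r + 1)) (Fin (r + 1)) ℂ) : Matrix (Fin r) (Fin 1) ℂ :=
  Matrix.of fun i _ => M i.succ (Fin.last r)

/-- Assemble the `(r+1)×(r+1)` matrix `[[p, d], [a, q]]` from its blocks. -/
def mkBlk (r : ℕ) (p : Matrix (Fin 1) (Fin r) ℂ) (d : ℂ)
    (a : Matrix (Fin r) (Fin r) ℂ) (q : Matrix (Fin r) (Fin 1) ℂ) :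
    Matrix (Fin (r + 1)) (Fin (r + 1)) ℂ :=
  Matrix.of fun i j =>
    if hi : (i : ℕ) = 0 then
      if hj : (j : ℕ) < r then p 0 ⟨(j : ℕ), hj⟩ else d
    else
      if hj : (j : ℕ) < r then a ⟨(i : ℕ) - 1, by have := i.isLt; omega⟩ ⟨(j : ℕ), hj⟩
      else q ⟨(i : ℕ) - 1, by have := i.isLt; omega⟩ 0

/-- The elementary Gauss factor `[[1, 0_{1×r}], [-f, I_r]]`. -/
def elemL (r : ℕ) (f : Matrix (Fin r) (Fin 1) ℂ) :
    Matrix (Fin (r + 1)) (Fin (r + 1)) ℂ :=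
  Matrix.of fun i j =>
    if hi : (i : ℕ) = 0 then (if (j : ℕ) = 0 then 1 else 0)
    else if hj : (j : ℕ) = 0 then -f ⟨(i : ℕ) - 1, by have := i.isLt; omega⟩ 0
    else if (i : ℕ) = (j : ℕ) then 1 else 0

/-- The elementary factor `[[I_r, 0_{r×1}], [-g, 1]]`. -/
def elemLrow (r : ℕ) (g : Matrix (Fin 1) (Fin r) ℂ) :
    Matrix (Fin (r + 1)) (Fin (r + 1)) ℂ :=
  Matrix.of fun i j =>
    if hi : (i : ℕ) < r then
      (if hj : (j : ℕ) < r then (if (i : ℕ) = (j : ℕ) then 1 else 0) else 0)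
    else if hj : (j : ℕ) < r then -g 0 ⟨(j : ℕ), hj⟩ else 1

/-- All leading principal minors are nonzero. -/
def StronglyRegular (N : ℕ) (A : Matrix (Fin N) (Fin N) ℂ) : Prop :=
  ∀ (k : ℕ) (hk : k ≤ N), 1 ≤ k →
    (A.submatrix (Fin.castLE hk) (Fin.castLE hk)).det ≠ 0

section AuxLemmas

variable {N r : ℕ}

lemma sum_fin_window {a b : ℕ} (hab : a + b ≤ N) (f : Fin N → ℂ)
    (h0 : ∀ m : Fin N, (m : ℕ) < a ∨ a + b ≤ (m : ℕ) → f m = 0) :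
    ∑ m : Fin N, f m = ∑ m : Fin b, f ⟨a + (m : ℕ), by omega⟩ := by
  classical
  set g : ℕ → ℂ := fun j => if h : j < N then f ⟨j, h⟩ else 0 with hg
  have h1 : ∑ m : Fin N, f m = ∑ j ∈ Finset.range N, g j := by
    rw [← Fin.sum_univ_eq_sum_range]
    refine Finset.sum_congr rfl fun m _ => ?_
    simp [hg]
  have h2 : ∑ j ∈ Finset.Ico a (a + b), g j = ∑ j ∈ Finset.range N, g j := by
    refine Finset.sum_subset ?_ ?_
    · intro x hx; rw [Finset.mem_Ico] at hx; exact Finset.mem_range.mpr (by omega)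
    · intro x hx hx'
      rw [Finset.mem_range] at hx; rw [Finset.mem_Ico] at hx'
      simp only [hg, dif_pos hx]
      exact h0 ⟨x, hx⟩ (by simp only []; omega)
  have h3 : ∑ j ∈ Finset.Ico a (a + b), g j = ∑ j ∈ Finset.range b, g (a + j) := by
    rw [Finset.sum_Ico_eq_sum_range]; simp
  have h4 : ∑ j ∈ Finset.range b, g (a + j) = ∑ m : Fin b, f ⟨a + (m : ℕ), by omega⟩ := by
    rw [← Fin.sum_univ_eq_sum_range (fun j => g (a + j)) b]
    refine Finset.sum_congr rfl fun m _ => ?_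
    simp only [hg]
    rw [dif_pos (by omega)]
  rw [h1, ← h2, h3, h4]

lemma delta_row_mul (X Y : Matrix (Fin N) (Fin N) ℂ) (i j : Fin N)
    (h : ∀ m, X i m = if (i : ℕ) = (m : ℕ) then 1 else 0) : (X * Y) i j = Y i j := by
  rw [Matrix.mul_apply, Finset.sum_eq_single i]
  · rw [h i, if_pos rfl, one_mul]
  · intro m _ hm
    rw [h m, if_neg (fun hv => hm (Fin.val_injective hv).symm), zero_mul]
  · simp

lemma embed_apply_out {k : ℕ} (M : Matrix (Fin (r + 1)) (Fin (r + 1)) ℂ) (i j : Fin N)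
    (h : ¬(k - 1 ≤ (j : ℕ) ∧ (j : ℕ) < k + r)) :
    embed N r k M i j = if (i : ℕ) = (j : ℕ) then 1 else 0 := by
  unfold embed; rw [Matrix.of_apply, dif_neg (by tauto)]

lemma embed_apply_rowout {k : ℕ} (M : Matrix (Fin (r + 1)) (Fin (r + 1)) ℂ) (i j : Fin N)
    (h : ¬(k - 1 ≤ (i : ℕ) ∧ (i : ℕ) < k + r)) :
    embed N r k M i j = if (i : ℕ) = (j : ℕ) then 1 else 0 := by
  unfold embed; rw [Matrix.of_apply, dif_neg (by tauto)]

lemma embed_apply_in {k : ℕ} (hk : 1 ≤ k)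
    (M : Matrix (Fin (r + 1)) (Fin (r + 1)) ℂ) (d c : Fin (r + 1)) (i j : Fin N)
    (hi : (i : ℕ) = k - 1 + (d : ℕ)) (hj : (j : ℕ) = k - 1 + (c : ℕ)) :
    embed N r k M i j = M d c := by
  have hd := d.isLt; have hc := c.isLt
  unfold embed
  rw [Matrix.of_apply, dif_pos (by omega)]
  congr 1
  · exact Fin.ext (show (i : ℕ) - (k - 1) = (d : ℕ) by omega)
  · exact Fin.ext (show (j : ℕ) - (k - 1) = (c : ℕ) by omega)

lemma mul_embed_out {k : ℕ} (W : Matrix (Fin N) (Fin N) ℂ)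
    (M : Matrix (Fin (r + 1)) (Fin (r + 1)) ℂ) (i j : Fin N)
    (h : ¬(k - 1 ≤ (j : ℕ) ∧ (j : ℕ) < k + r)) :
    (W * embed N r k M) i j = W i j := by
  rw [Matrix.mul_apply, Finset.sum_eq_single j]
  · rw [embed_apply_out M j j h, if_pos rfl, mul_one]
  · intro m _ hm
    rw [embed_apply_out M m j h, if_neg (fun hv => hm (Fin.val_injective hv)), mul_zero]
  · simp

lemma mul_embed_in {k : ℕ} (hk : 1 ≤ k) (hkN : k + r ≤ N)
    (W : Matrix (Fin N) (Fin N) ℂ) (M : Matrix (Fin (r + 1)) (Fin (r + 1)) ℂ)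
    (i j : Fin N) (c : Fin (r + 1)) (hj : (j : ℕ) = k - 1 + (c : ℕ)) :
    (W * embed N r k M) i j
      = ∑ m : Fin (r + 1), W i ⟨k - 1 + (m : ℕ), by have := m.isLt; omega⟩ * M m c := by
  have hc := c.isLt
  rw [Matrix.mul_apply]
  rw [sum_fin_window (a := k - 1) (b := r + 1) (by omega)]
  · refine Finset.sum_congr rfl fun m _ => ?_
    rw [embed_apply_in hk M m c _ _ rfl hj]
  · intro m hm
    rw [embed_apply_rowout M m _ (by omega)]
    rw [if_neg (by omega), mul_zero]

lemma embed_mul {k : ℕ} (hk : 1 ≤ k) (hkN : k + r ≤ N)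
    (M₁ M₂ : Matrix (Fin (r + 1)) (Fin (r + 1)) ℂ) :
    embed N r k M₁ * embed N r k M₂ = embed N r k (M₁ * M₂) := by
  ext i j
  by_cases hj : k - 1 ≤ (j : ℕ) ∧ (j : ℕ) < k + r
  · have hc : (j : ℕ) - (k - 1) < r + 1 := by omega
    set c : Fin (r + 1) := ⟨(j : ℕ) - (k - 1), hc⟩ with hcdef
    have hjc : (j : ℕ) = k - 1 + (c : ℕ) := by simp [hcdef]; omega
    rw [mul_embed_in hk hkN (embed N r k M₁) M₂ i j c hjc]
    by_cases hi : k - 1 ≤ (i : ℕ) ∧ (i : ℕ) < k + r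
    · have hd : (i : ℕ) - (k - 1) < r + 1 := by omega
      set d : Fin (r + 1) := ⟨(i : ℕ) - (k - 1), hd⟩ with hddef
      have hid : (i : ℕ) = k - 1 + (d : ℕ) := by simp [hddef]; omega
      rw [embed_apply_in hk (M₁ * M₂) d c i j hid hjc, Matrix.mul_apply]
      refine Finset.sum_congr rfl fun m _ => ?_
      rw [embed_apply_in hk M₁ d m i _ hid rfl]
    · have hz : ∀ m : Fin (r + 1),
          embed N r k M₁ i (⟨k - 1 + (m : ℕ), by have := m.isLt; omega⟩ : Fin N)
            * M₂ m c = 0 := by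
        intro m
        have := m.isLt
        rw [embed_apply_rowout M₁ i _ hi,
          if_neg (show ¬((i : ℕ) = k - 1 + (m : ℕ)) by omega), zero_mul]
      rw [Finset.sum_congr rfl (fun m _ => hz m), Finset.sum_const_zero]
      rw [embed_apply_rowout _ i _ hi, if_neg (by omega)]
  · rw [mul_embed_out _ _ _ _ hj, embed_apply_out _ _ _ hj, embed_apply_out _ _ _ hj]

lemma embed_one {k : ℕ} (hk : 1 ≤ k) (hkN : k + r ≤ N) :
    embed N r k (1 : Matrix (Fin (r + 1)) (Fin (r + 1)) ℂ) = 1 := by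
  ext i j
  unfold embed
  rw [Matrix.of_apply]
  by_cases h : k - 1 ≤ (i : ℕ) ∧ (i : ℕ) < k + r ∧ k - 1 ≤ (j : ℕ) ∧ (j : ℕ) < k + r
  · rw [dif_pos h, Matrix.one_apply, Matrix.one_apply]
    by_cases hij : i = j
    · rw [if_pos (by subst hij; rfl), if_pos hij]
    · rw [if_neg (fun hv => hij (Fin.ext (by
        have hv' : (i : ℕ) - (k - 1) = (j : ℕ) - (k - 1) := congrArg Fin.val hv
        omega))), if_neg hij]
  · rw [dif_neg h, Matrix.one_apply]
    by_cases hij : i = j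
    · rw [if_pos (by subst hij; rfl), if_pos hij]
    · rw [if_neg (fun hv => hij (Fin.val_injective hv)), if_neg hij]

lemma embedLast_apply_rowout (M : Matrix (Fin r) (Fin r) ℂ) (i j : Fin N)
    (h : (i : ℕ) < N - r) :
    embedLast N r M i j = if (i : ℕ) = (j : ℕ) then 1 else 0 := by
  unfold embedLast; rw [Matrix.of_apply, dif_neg (by omega)]

lemma embedLast_apply_out (M : Matrix (Fin r) (Fin r) ℂ) (i j : Fin N)
    (h : (j : ℕ) < N - r) :
    embedLast N r M i j = if (i : ℕ) = (j : ℕ) then 1 else 0 := by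
  unfold embedLast; rw [Matrix.of_apply, dif_neg (by omega)]

lemma embedLast_apply_in (M : Matrix (Fin r) (Fin r) ℂ) (d c : Fin r) (i j : Fin N)
    (hi : (i : ℕ) = N - r + (d : ℕ)) (hj : (j : ℕ) = N - r + (c : ℕ)) :
    embedLast N r M i j = M d c := by
  unfold embedLast
  rw [Matrix.of_apply, dif_pos (by omega)]
  congr 1
  · exact Fin.ext (show (i : ℕ) - (N - r) = (d : ℕ) by omega)
  · exact Fin.ext (show (j : ℕ) - (N - r) = (c : ℕ) by omega)

lemma mul_embedLast_out (W : Matrix (Fin N) (Fin N) ℂ)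
    (M : Matrix (Fin r) (Fin r) ℂ) (i j : Fin N) (h : (j : ℕ) < N - r) :
    (W * embedLast N r M) i j = W i j := by
  rw [Matrix.mul_apply, Finset.sum_eq_single j]
  · rw [embedLast_apply_out M j j h, if_pos rfl, mul_one]
  · intro m _ hm
    rw [embedLast_apply_out M m j h, if_neg (fun hv => hm (Fin.val_injective hv)), mul_zero]
  · simp

lemma mul_embedLast_in (hrN : r ≤ N)
    (W : Matrix (Fin N) (Fin N) ℂ) (M : Matrix (Fin r) (Fin r) ℂ)
    (i j : Fin N) (c : Fin r) (hj : (j : ℕ) = N - r + (c : ℕ)) :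
    (W * embedLast N r M) i j
      = ∑ m : Fin r, W i ⟨N - r + (m : ℕ), by have := m.isLt; omega⟩ * M m c := by
  have hc := c.isLt
  rw [Matrix.mul_apply]
  rw [sum_fin_window (a := N - r) (b := r) (by omega)]
  · refine Finset.sum_congr rfl fun m _ => ?_
    rw [embedLast_apply_in M m c _ _ rfl hj]
  · intro m hm
    rw [embedLast_apply_rowout M m _ (by omega)]
    rw [if_neg (by omega), mul_zero]

lemma embedLast_mul (hrN : r ≤ N) (M₁ M₂ : Matrix (Fin r) (Fin r) ℂ) :
    embedLast N r M₁ * embedLast N r M₂ = embedLast N r (M₁ * M₂) := by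
  ext i j
  by_cases hj : N - r ≤ (j : ℕ)
  · have hc : (j : ℕ) - (N - r) < r := by have := j.isLt; omega
    set c : Fin r := ⟨(j : ℕ) - (N - r), hc⟩ with hcdef
    have hjc : (j : ℕ) = N - r + (c : ℕ) := by simp [hcdef]; omega
    rw [mul_embedLast_in hrN (embedLast N r M₁) M₂ i j c hjc]
    by_cases hi : N - r ≤ (i : ℕ)
    · have hd : (i : ℕ) - (N - r) < r := by have := i.isLt; omega
      set d : Fin r := ⟨(i : ℕ) - (N - r), hd⟩ with hddef
      have hid : (i : ℕ) = N - r + (d : ℕ) := by simp [hddef]; omega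
      rw [embedLast_apply_in (M₁ * M₂) d c i j hid hjc, Matrix.mul_apply]
      refine Finset.sum_congr rfl fun m _ => ?_
      rw [embedLast_apply_in M₁ d m i _ hid rfl]
    · have hz : ∀ m : Fin r,
          embedLast N r M₁ i (⟨N - r + (m : ℕ), by have := m.isLt; omega⟩ : Fin N)
            * M₂ m c = 0 := by
        intro m
        have := m.isLt
        rw [embedLast_apply_rowout M₁ i _ (by omega),
          if_neg (show ¬((i : ℕ) = N - r + (m : ℕ)) by omega), zero_mul]
      rw [Finset.sum_congr rfl (fun m _ => hz m), Finset.sum_const_zero]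
      rw [embedLast_apply_rowout _ i _ (by omega), if_neg (by omega)]
  · rw [mul_embedLast_out _ _ _ _ (by omega), embedLast_apply_out _ _ _ (by omega),
      embedLast_apply_out _ _ _ (by omega)]

lemma embedLast_one :
    embedLast N r (1 : Matrix (Fin r) (Fin r) ℂ) = 1 := by
  ext i j
  unfold embedLast
  rw [Matrix.of_apply]
  by_cases h : N - r ≤ (i : ℕ) ∧ N - r ≤ (j : ℕ)
  · rw [dif_pos h, Matrix.one_apply, Matrix.one_apply]
    by_cases hij : i = j
    · rw [if_pos (by subst hij; rfl), if_pos hij]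
    · rw [if_neg (fun hv => hij (Fin.ext (by
        have hv' : (i : ℕ) - (N - r) = (j : ℕ) - (N - r) := congrArg Fin.val hv
        omega))), if_neg hij]
  · rw [dif_neg h, Matrix.one_apply]
    by_cases hij : i = j
    · rw [if_pos (by subst hij; rfl), if_pos hij]
    · rw [if_neg (fun hv => hij (Fin.val_injective hv)), if_neg hij]

lemma prod_mul_prod_reverse_eq_one (E F : ℕ → Matrix (Fin N) (Fin N) ℂ) :
    ∀ n : ℕ, (∀ k, 1 ≤ k → k ≤ n → E k * F k = 1) →
      ((List.range' 1 n).map E).prod * (((List.range' 1 n).reverse).map F).prod = 1 := by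
  intro n
  induction n with
  | zero => intro _; simp
  | succ n ih =>
      intro h
      rw [List.range'_1_concat, List.reverse_append, List.map_append, List.prod_append]
      simp only [List.reverse_cons, List.reverse_nil, List.nil_append, List.map_cons,
        List.map_nil, List.prod_cons, List.prod_nil, List.map_singleton, List.prod_singleton,
        List.singleton_append, mul_one]
      calc ((List.range' 1 n).map E).prod * E (1 + n) *
            (F (1 + n) * (((List.range' 1 n).reverse).map F).prod)
          = ((List.range' 1 n).map E).prod * (E (1 + n) * F (1 + n)) *
            (((List.range' 1 n).reverse).map F).prod := by
            rw [mul_assoc, mul_assoc, mul_assoc]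
        _ = 1 := by
            rw [h (1 + n) (by omega) (by omega), mul_one,
              ih (fun k hk1 hk2 => h k hk1 (by omega))]

lemma prod_row_delta (V : ℕ → Matrix (Fin N) (Fin N) ℂ) (i : Fin N) :
    ∀ l : List ℕ, (∀ k ∈ l, ∀ m : Fin N, V k i m = if (i : ℕ) = (m : ℕ) then 1 else 0) →
      ∀ j : Fin N, ((l.map V).prod) i j = if (i : ℕ) = (j : ℕ) then 1 else 0 := by
  intro l
  induction l with
  | nil =>
      intro _ j; simp only [List.map_nil, List.prod_nil]
      rw [Matrix.one_apply]
      by_cases hij : i = j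
      · rw [if_pos hij, if_pos (by subst hij; rfl)]
      · rw [if_neg hij, if_neg (fun hv => hij (Fin.val_injective hv))]
  | cons k l ih =>
      intro h j
      simp only [List.map_cons, List.prod_cons]
      rw [delta_row_mul _ _ _ _ (h k (by simp))]
      exact ih (fun k' hk' => h k' (by simp [hk'])) j

end AuxLemmas

lemma aGT_nil (r : ℕ) (a : ℕ → Matrix (Fin r) (Fin r) ℂ) {i s : ℕ} (h : i - 1 ≤ s) :
    aGT r a i s = 1 := by
  unfold aGT
  rw [show i - 1 - s = 0 by omega]
  simp

lemma aGT_step (r : ℕ) (a : ℕ → Matrix (Fin r) (Fin r) ℂ) {i s : ℕ} (h : s + 1 ≤ i - 1) :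
    aGT r a i s = aGT r a i (s + 1) * a (s + 1) := by
  unfold aGT
  rw [show i - 1 - s = (i - 1 - (s + 1)) + 1 by omega, List.range'_succ, List.reverse_cons,
    List.map_append, List.prod_append]
  simp

lemma sum_fin_window_succ {N : ℕ} {a b : ℕ} (hab : a + 1 + b ≤ N) (f : Fin N → ℂ)
    (h0 : ∀ m : Fin N, (m : ℕ) < a ∨ a + 1 + b ≤ (m : ℕ) → f m = 0) :
    ∑ m : Fin N, f m = f ⟨a, by omega⟩ + ∑ m : Fin b, f ⟨a + 1 + (m : ℕ), by omega⟩ := by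
  rw [sum_fin_window (a := a) (b := b + 1) (by omega) f
    (by intro m hm; exact h0 m (by omega))]
  rw [Fin.sum_univ_succ]
  refine congrArg₂ (· + ·) ?_ ?_
  · exact congrArg f (Fin.ext (by simp))
  · refine Finset.sum_congr rfl fun s _ => ?_
    exact congrArg f (Fin.ext (by simp [Fin.val_succ]; omega))


@[simp] lemma fin_val_mk {n a : ℕ} (h : a < n) : ((⟨a, h⟩ : Fin n) : ℕ) = a := rfl

set_option maxHeartbeats 2000000 in
/-- **QR-based inversion of a two-sided band matrix (linear complexity version).**
With `A = U·R`, `R` invertible upper triangular and upper band of order `2r`, and `U` a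
product of embedded unitary factors, the data `q(k) = q_U(k)`, `a(k) = a_U(k)`,
`P_{N-r+1} = (R(N-r+1:N, N-r+1:N))⁻¹·U_{N-r+1}*`, the full recursion for
`k = N-r, …, N-2r+1` and the truncated (`2r`-row) recursion `t_k` for `k = N-2r, …, 1`
yield lower Green generators `p(i), q(i), a(i), p(N-r+1) := P_{N-r+1}` of `A⁻¹`. -/
theorem qr_inversion_twoSidedBand (N r : ℕ) (hr : 0 < r) (hN2r : 2 * r < N)
    (A : Matrix (Fin N) (Fin N) ℂ) (hA : IsUnit A)
    (hband : ∀ i j : Fin N, ((j : ℕ) + r < (i : ℕ) ∨ (i : ℕ) + r < (j : ℕ)) → A i j = 0)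
    (Uk : ℕ → Matrix (Fin (r + 1)) (Fin (r + 1)) ℂ) (Ulast : Matrix (Fin r) (Fin r) ℂ)
    (hUk : ∀ (k : ℕ), 1 ≤ k → k ≤ N - r → Uk k ∈ Matrix.unitaryGroup (Fin (r + 1)) ℂ)
    (hUlast : Ulast ∈ Matrix.unitaryGroup (Fin r) ℂ)
    (R : Matrix (Fin N) (Fin N) ℂ) (hR : IsUnit R)
    (hRtri : ∀ i j : Fin N, (j : ℕ) < (i : ℕ) → R i j = 0)
    (hRband : ∀ i j : Fin N, (i : ℕ) + 2 * r < (j : ℕ) → R i j = 0)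
    (hQR : A = (prodAsc N r Uk * embedLast N r Ulast) * R)
    -- the matrices `P_k`, `k = N-2r+1, …, N-r+1` (of size `(N-k+1)×r`), encoded by rows
    (P : ℕ → ℕ → Fin r → ℂ)
    (p : ℕ → Matrix (Fin 1) (Fin r) ℂ)
    (hPtop : ∀ (t : Fin r) (j : Fin r),
      P (N - r + 1) (t : ℕ) j
        = (((Matrix.of fun i j : Fin r =>
              R ⟨N - r + (i : ℕ), by have := i.isLt; omega⟩
                ⟨N - r + (j : ℕ), by have := j.isLt; omega⟩)⁻¹) * Ulastᴴ) t j)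
    (hp1 : ∀ (k : ℕ) (hk1 : N - 2 * r + 1 ≤ k) (hk2 : k ≤ N - r) (j : Fin r),
      p k 0 j = (1 / R ⟨k - 1, by omega⟩ ⟨k - 1, by omega⟩)
        * (blkP r ((Uk k)ᴴ) 0 j
            - ∑ t : Fin (N - k), ∑ l : Fin r,
                R ⟨k - 1, by omega⟩ ⟨k + (t : ℕ), by have := t.isLt; omega⟩
                  * P (k + 1) (t : ℕ) l * blkA r ((Uk k)ᴴ) l j))
    (hPfirst : ∀ (k : ℕ) (hk1 : N - 2 * r + 1 ≤ k) (hk2 : k ≤ N - r) (j : Fin r),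
      P k 0 j = p k 0 j)
    (hPrec : ∀ (k : ℕ) (hk1 : N - 2 * r + 1 ≤ k) (hk2 : k ≤ N - r) (t : ℕ) (j : Fin r),
      P k (t + 1) j = ∑ l : Fin r, P (k + 1) t l * blkA r ((Uk k)ᴴ) l j)
    -- the truncated matrices `t_k`, `k = 1, …, N-2r+1` (of size `2r × r`)
    (t : ℕ → Matrix (Fin (2 * r)) (Fin r) ℂ)
    (htTop : ∀ (i : Fin (2 * r)) (j : Fin r),
      t (N - 2 * r + 1) i j = P (N - 2 * r + 1) (i : ℕ) j)
    (hp2 : ∀ (k : ℕ) (hk1 : 1 ≤ k) (hk2 : k ≤ N - 2 * r) (j : Fin r),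
      p k 0 j = (1 / R ⟨k - 1, by omega⟩ ⟨k - 1, by omega⟩)
        * (blkP r ((Uk k)ᴴ) 0 j
            - ∑ τ : Fin (2 * r), ∑ l : Fin r,
                R ⟨k - 1, by omega⟩ ⟨k + (τ : ℕ), by have := τ.isLt; omega⟩
                  * t (k + 1) τ l * blkA r ((Uk k)ᴴ) l j))
    (htFirst : ∀ (k : ℕ) (hk1 : 1 ≤ k) (hk2 : k ≤ N - 2 * r) (j : Fin r),
      t k ⟨0, by omega⟩ j = p k 0 j)
    (htRec : ∀ (k : ℕ) (hk1 : 1 ≤ k) (hk2 : k ≤ N - 2 * r)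
        (i : ℕ) (hi : i < 2 * r - 1) (j : Fin r),
      t k ⟨i + 1, by omega⟩ j
        = ∑ l : Fin r, t (k + 1) ⟨i, by omega⟩ l * blkA r ((Uk k)ᴴ) l j) :
    IsLowerGreenGenerators N r (by omega) p (fun k => blkQ r ((Uk k)ᴴ))
      (fun k => blkA r ((Uk k)ᴴ))
      (Matrix.of fun i j : Fin r => P (N - r + 1) (i : ℕ) j) A⁻¹ := by
  classical
  have hrN : r ≤ N := by omega
  set aU : ℕ → Matrix (Fin r) (Fin r) ℂ := fun k => blkA r ((Uk k)ᴴ) with haU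
  set pL : Matrix (Fin r) (Fin r) ℂ :=
    Matrix.of (fun i j : Fin r => P (N - r + 1) (i : ℕ) j) with hpL
  set V : ℕ → Matrix (Fin N) (Fin N) ℂ := fun m => embed N r m ((Uk m)ᴴ) with hV
  set W : ℕ → Matrix (Fin N) (Fin N) ℂ := fun m =>
    embedLast N r Ulastᴴ * ((List.range' m (N - r + 1 - m)).reverse.map V).prod with hW
  set C : ℕ → Matrix (Fin N) (Fin N) ℂ := fun m => R⁻¹ * W m with hCdef
  -- basic facts about R
  have hRdet : IsUnit R.det := (Matrix.isUnit_iff_isUnit_det R).mp hR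
  have hRR : R * R⁻¹ = 1 := Matrix.mul_nonsing_inv R hRdet
  have hRbt : R.BlockTriangular id := fun i j hij => hRtri i j hij
  have hdiag : ∀ i : Fin N, R i i ≠ 0 := by
    intro i hz
    have hne : R.det ≠ 0 := hRdet.ne_zero
    rw [Matrix.det_of_upperTriangular hRbt] at hne
    exact hne (Finset.prod_eq_zero (Finset.mem_univ i) hz)
  have hRinvTri : ∀ i j : Fin N, (j : ℕ) < (i : ℕ) → R⁻¹ i j = 0 := by
    haveI := R.invertibleOfIsUnitDet hRdet
    intro i j hij
    exact Matrix.blockTriangular_inv_of_blockTriangular hRbt hij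
  -- W and C machinery
  have hWstep : ∀ m, 1 ≤ m → m ≤ N - r → W m = W (m + 1) * V m := by
    intro m h1 h2
    simp only [hW]
    rw [mul_assoc]
    congr 1
    rw [show N - r + 1 - m = (N - r - m) + 1 by omega, List.range'_succ, List.reverse_cons,
      List.map_append, List.prod_append, show N - r + 1 - (m + 1) = N - r - m by omega]
    simp
  have hCstep : ∀ m, 1 ≤ m → m ≤ N - r → C m = C (m + 1) * V m := by
    intro m h1 h2
    simp only [hCdef]
    rw [hWstep m h1 h2, ← mul_assoc]
  have hRC : ∀ m, R * C m = W m := by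
    intro m
    simp only [hCdef]
    rw [← mul_assoc, hRR, one_mul]
  have hWrow : ∀ m, m ≤ N - r + 1 → ∀ i j : Fin N, (i : ℕ) + 1 < m →
      W m i j = if (i : ℕ) = (j : ℕ) then 1 else 0 := by
    intro m hm i j hi
    simp only [hW]
    rw [delta_row_mul _ _ _ _ (fun m' => embedLast_apply_rowout _ _ _ (by omega))]
    refine prod_row_delta V i _ ?_ j
    intro x hx m'
    rw [List.mem_reverse, List.mem_range'_1] at hx
    simp only [hV]
    exact embed_apply_rowout _ _ _ (by omega)
  -- A⁻¹ = C 1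
  have hUmul : ∀ k, 1 ≤ k → k ≤ N - r → embed N r k (Uk k) * V k = 1 := by
    intro k h1 h2
    simp only [hV]
    rw [embed_mul h1 (by omega)]
    have hu : Uk k * (Uk k)ᴴ = 1 := by
      have := (Matrix.mem_unitaryGroup_iff).mp (hUk k h1 h2)
      rwa [Matrix.star_eq_conjTranspose] at this
    rw [hu, embed_one h1 (by omega)]
  have hAC1 : A * C 1 = 1 := by
    rw [hQR]
    simp only [hCdef, hW]
    rw [show N - r + 1 - 1 = N - r by omega]
    rw [mul_assoc (prodAsc N r Uk * embedLast N r Ulast) R _, ← mul_assoc R R⁻¹ _,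
      hRR, one_mul]
    rw [← mul_assoc (prodAsc N r Uk * embedLast N r Ulast) (embedLast N r Ulastᴴ) _,
      mul_assoc (prodAsc N r Uk) (embedLast N r Ulast) (embedLast N r Ulastᴴ)]
    have hu : Ulast * Ulastᴴ = 1 := by
      have := (Matrix.mem_unitaryGroup_iff).mp hUlast
      rwa [Matrix.star_eq_conjTranspose] at this
    rw [embedLast_mul hrN, hu, embedLast_one, mul_one]
    exact prod_mul_prod_reverse_eq_one _ V (N - r) (fun k h1 h2 => hUmul k h1 h2)
  have hAinv : A⁻¹ = C 1 := Matrix.inv_eq_right_inv hAC1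
  -- the generator function G
  set G : ℕ → ℕ → Fin r → ℂ := fun k u c =>
    if h1 : k + u ≤ N - r then (p (k + u) * aGT r aU (k + u) (k - 1)) 0 c
    else if h2 : k + u ≤ N then
      (pL * aGT r aU (N - r + 1) (k - 1)) ⟨k + u - (N - r + 1), by omega⟩ c
    else 0 with hG
  have hGtop : ∀ u (c : Fin r), u < r → G (N - r + 1) u c = P (N - r + 1) u c := by
    intro u c hu
    simp only [hG]
    rw [dif_neg (by omega), dif_pos (by omega)]
    rw [aGT_nil r aU (by omega), Matrix.mul_one]
    rw [show (⟨N - r + 1 + u - (N - r + 1), by omega⟩ : Fin r) = ⟨u, hu⟩ from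
      Fin.ext (by simp only [fin_val_mk]; omega)]
    simp only [hpL, Matrix.of_apply]
  have hGrec : ∀ k u (c : Fin r), 1 ≤ k → k ≤ N - r → k + u + 1 ≤ N →
      G k (u + 1) c = ∑ l : Fin r, G (k + 1) u l * aU k l c := by
    intro k u c hk1 hk2 hkuN
    by_cases h1 : k + (u + 1) ≤ N - r
    · simp only [hG]
      simp only [dif_pos h1, dif_pos (show k + 1 + u ≤ N - r by omega)]
      rw [show k + 1 + u = k + (u + 1) by omega]
      rw [aGT_step r aU (show (k - 1) + 1 ≤ (k + (u + 1)) - 1 by omega)]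
      rw [show (k - 1) + 1 = k by omega]
      rw [← Matrix.mul_assoc]
      rw [Matrix.mul_apply]
      refine Finset.sum_congr rfl fun l _ => ?_
      rw [show k + 1 - 1 = k by omega]
    · simp only [hG]
      simp only [dif_neg h1, dif_neg (show ¬(k + 1 + u ≤ N - r) by omega),
        dif_pos (show k + (u + 1) ≤ N by omega), dif_pos (show k + 1 + u ≤ N by omega)]
      rw [aGT_step r aU (show (k - 1) + 1 ≤ (N - r + 1) - 1 by omega)]
      rw [show (k - 1) + 1 = k by omega]
      rw [← Matrix.mul_assoc]
      rw [Matrix.mul_apply]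
      rw [show (⟨k + 1 + u - (N - r + 1), by omega⟩ : Fin r)
        = ⟨k + (u + 1) - (N - r + 1), by omega⟩ from Fin.ext (by simp only [fin_val_mk]; omega)]
      refine Finset.sum_congr rfl fun l _ => ?_
      rw [show k + 1 - 1 = k by omega]
  -- the block inverse identity
  have hXright : (Matrix.of fun i j : Fin r =>
        R ⟨N - r + (i : ℕ), by have := i.isLt; omega⟩ ⟨N - r + (j : ℕ), by have := j.isLt; omega⟩) *
      (Matrix.of fun i j : Fin r =>
        R⁻¹ ⟨N - r + (i : ℕ), by have := i.isLt; omega⟩ ⟨N - r + (j : ℕ), by have := j.isLt; omega⟩)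
      = 1 := by
    ext tt j
    rw [Matrix.mul_apply]
    have hfull : ∑ m : Fin N, R ⟨N - r + (tt : ℕ), by have := tt.isLt; omega⟩ m
        * R⁻¹ m ⟨N - r + (j : ℕ), by have := j.isLt; omega⟩
        = (1 : Matrix (Fin N) (Fin N) ℂ) ⟨N - r + (tt : ℕ), by have := tt.isLt; omega⟩
            ⟨N - r + (j : ℕ), by have := j.isLt; omega⟩ := by
      rw [← Matrix.mul_apply, hRR]
    rw [sum_fin_window (a := N - r) (b := r) (by omega) _ (fun m hm => by
      have := m.isLt
      rw [hRtri _ m (show (m : ℕ) < N - r + (tt : ℕ) by omega), zero_mul])] at hfull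
    have hone : (1 : Matrix (Fin N) (Fin N) ℂ) ⟨N - r + (tt : ℕ), by have := tt.isLt; omega⟩
        ⟨N - r + (j : ℕ), by have := j.isLt; omega⟩
        = (1 : Matrix (Fin r) (Fin r) ℂ) tt j := by
      rw [Matrix.one_apply, Matrix.one_apply]
      by_cases h : tt = j
      · rw [if_pos (by rw [h]), if_pos h]
      · rw [if_neg (fun hv => h (Fin.ext (by
          have hv' := congrArg Fin.val hv
          simp only [] at hv'
          omega))), if_neg h]
    rw [hone] at hfull
    rw [← hfull]
    refine Finset.sum_congr rfl fun m _ => ?_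
    simp only [Matrix.of_apply]
  have hblkinv : (Matrix.of fun i j : Fin r =>
        R ⟨N - r + (i : ℕ), by have := i.isLt; omega⟩ ⟨N - r + (j : ℕ), by have := j.isLt; omega⟩)⁻¹
      = (Matrix.of fun i j : Fin r =>
        R⁻¹ ⟨N - r + (i : ℕ), by have := i.isLt; omega⟩ ⟨N - r + (j : ℕ), by have := j.isLt; omega⟩) :=
    Matrix.inv_eq_right_inv hXright
  -- C (N-r+1)
  have hCtop : C (N - r + 1) = R⁻¹ * embedLast N r Ulastᴴ := by
    simp only [hCdef, hW]
    rw [show N - r + 1 - (N - r + 1) = 0 by omega]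
    simp
  -- the expansion of C k in terms of C (k+1)
  have hexpand : ∀ (k : ℕ) (hk1 : 1 ≤ k) (hk2 : k ≤ N - r) (row : Fin N) (c : Fin (r + 1))
      (j : Fin N), (j : ℕ) = k - 1 + (c : ℕ) →
      C k row j = C (k + 1) row ⟨k - 1, by omega⟩ * ((Uk k)ᴴ) 0 c
        + ∑ l : Fin r, C (k + 1) row ⟨k + (l : ℕ), by have := l.isLt; omega⟩
            * ((Uk k)ᴴ) (Fin.succ l) c := by
    intro k hk1 hk2 row c j hj
    rw [hCstep k hk1 hk2]
    simp only [hV]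
    rw [mul_embed_in hk1 (by omega) _ _ _ _ c hj]
    rw [Fin.sum_univ_succ]
    refine congrArg₂ (· + ·) ?_ (Finset.sum_congr rfl fun l _ => ?_)
    · refine congrArg₂ (· * ·) (congrArg _ (Fin.ext ?_)) rfl
      simp
    · refine congrArg₂ (· * ·) (congrArg _ (Fin.ext ?_)) rfl
      simp [Fin.val_succ]
      omega
  -- the main downward induction
  set Phi : ℕ → Prop := fun k =>
    (∀ u (c : Fin r), N - 2 * r + 1 ≤ k → k + u ≤ N → P k u c = G k u c) ∧
    (∀ (i : Fin (2 * r)) (c : Fin r), k ≤ N - 2 * r + 1 → t k i c = G k (i : ℕ) c) ∧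
    (∀ i j : Fin N, k - 1 ≤ (i : ℕ) → (j : ℕ) < k - 1 → C k i j = 0) ∧
    (∀ u (c : Fin r) (hu : k - 1 + u < N) (hc : k - 1 + (c : ℕ) < N),
        C k ⟨k - 1 + u, hu⟩ ⟨k - 1 + (c : ℕ), hc⟩ = G k u c) with hPhi
  have base : Phi (N - r + 1) := by
    simp only [hPhi]
    refine ⟨?_, ?_, ?_, ?_⟩
    · intro u c _ huN
      exact (hGtop u c (by omega)).symm
    · intro i c hle
      exfalso; omega
    · intro i j hi hj
      rw [hCtop, mul_embedLast_out _ _ _ _ (by omega)]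
      exact hRinvTri i j (by omega)
    · intro u c hu hc
      have hu' : u < r := by omega
      rw [hCtop, mul_embedLast_in hrN R⁻¹ Ulastᴴ _ _ c
        (show N - r + 1 - 1 + (c : ℕ) = N - r + (c : ℕ) by omega)]
      rw [hGtop u c hu']
      rw [hPtop ⟨u, hu'⟩ c, hblkinv, Matrix.mul_apply]
      refine Finset.sum_congr rfl fun m _ => ?_
      simp only [Matrix.of_apply]
      rw [show (⟨N - r + 1 - 1 + u, hu⟩ : Fin N)
        = ⟨N - r + ((⟨u, hu'⟩ : Fin r) : ℕ), by simp only [fin_val_mk]; omega⟩ from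
          Fin.ext (by simp only [fin_val_mk]; omega)]
  have step : ∀ k, 1 ≤ k → k ≤ N - r → Phi (k + 1) → Phi k := by
    intro k hk1 hk2 IH
    simp only [hPhi] at IH ⊢
    obtain ⟨IHP, IHt, IHa, IHb⟩ := IH
    have hkm1 : k - 1 < N := by omega
    have IHa' : ∀ (i j : Fin N), k ≤ (i : ℕ) → (j : ℕ) < k → C (k + 1) i j = 0 := by
      intro i j hi hj
      exact IHa i j (by omega) (by omega)
    have IHb' : ∀ u (c : Fin r) (hu : k + u < N) (hc : k + (c : ℕ) < N),
        C (k + 1) ⟨k + u, hu⟩ ⟨k + (c : ℕ), hc⟩ = G (k + 1) u c := by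
      intro u c hu hc
      rw [show (⟨k + u, hu⟩ : Fin N) = ⟨k + 1 - 1 + u, by omega⟩ from
            Fin.ext (by simp only [fin_val_mk]; omega),
          show (⟨k + (c : ℕ), hc⟩ : Fin N) = ⟨k + 1 - 1 + (c : ℕ), by omega⟩ from
            Fin.ext (by simp only [fin_val_mk]; omega)]
      exact IHb u c (by omega) (by omega)
    -- row k-1 of C (k+1)
    have hkrow : ∀ col : Fin N,
        C (k + 1) ⟨k - 1, hkm1⟩ col
          = (1 / R ⟨k - 1, hkm1⟩ ⟨k - 1, hkm1⟩)
            * ((if (k - 1 : ℕ) = (col : ℕ) then 1 else 0)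
               - ∑ s : Fin (N - k),
                   R ⟨k - 1, hkm1⟩ ⟨k + (s : ℕ), by have := s.isLt; omega⟩
                     * C (k + 1) ⟨k + (s : ℕ), by have := s.isLt; omega⟩ col) := by
      intro col
      have h0 : ∑ m : Fin N, R ⟨k - 1, hkm1⟩ m * C (k + 1) m col
          = if (k - 1 : ℕ) = (col : ℕ) then 1 else 0 := by
        rw [← Matrix.mul_apply, hRC (k + 1)]
        exact hWrow (k + 1) (by omega) _ col (show k - 1 + 1 < k + 1 by omega)
      rw [sum_fin_window_succ (a := k - 1) (b := N - k) (by omega) _ (fun m hm => by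
        have := m.isLt
        rw [hRtri _ m (show (m : ℕ) < k - 1 by omega), zero_mul])] at h0
      have hSeq : ∑ m : Fin (N - k),
          R ⟨k - 1, hkm1⟩ ⟨k - 1 + 1 + (m : ℕ), by have := m.isLt; omega⟩
            * C (k + 1) ⟨k - 1 + 1 + (m : ℕ), by have := m.isLt; omega⟩ col
          = ∑ s : Fin (N - k),
              R ⟨k - 1, hkm1⟩ ⟨k + (s : ℕ), by have := s.isLt; omega⟩
                * C (k + 1) ⟨k + (s : ℕ), by have := s.isLt; omega⟩ col := by
        refine Finset.sum_congr rfl fun m _ => ?_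
        rw [show (⟨k - 1 + 1 + (m : ℕ), by have := m.isLt; omega⟩ : Fin N)
          = ⟨k + (m : ℕ), by have := m.isLt; omega⟩ from
            Fin.ext (by simp only [fin_val_mk]; omega)]
      rw [hSeq] at h0
      have h1 := eq_sub_of_add_eq h0
      rw [← h1]
      rw [one_div, ← mul_assoc, inv_mul_cancel₀ (hdiag ⟨k - 1, hkm1⟩), one_mul]
    have hkrow0 : C (k + 1) ⟨k - 1, hkm1⟩ ⟨k - 1, hkm1⟩
        = 1 / R ⟨k - 1, hkm1⟩ ⟨k - 1, hkm1⟩ := by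
      rw [hkrow ⟨k - 1, hkm1⟩, if_pos rfl]
      have h0 : ∀ s : Fin (N - k),
          R ⟨k - 1, hkm1⟩ ⟨k + (s : ℕ), by have := s.isLt; omega⟩
            * C (k + 1) ⟨k + (s : ℕ), by have := s.isLt; omega⟩ ⟨k - 1, hkm1⟩ = 0 := by
        intro s
        rw [IHa' _ _ (show k ≤ k + (s : ℕ) from Nat.le_add_right _ _)
          (show k - 1 < k by omega), mul_zero]
      rw [Finset.sum_congr rfl (fun s _ => h0 s), Finset.sum_const_zero, sub_zero, mul_one]
    have hkrowl : ∀ (l : Fin r) (hl : k + (l : ℕ) < N),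
        C (k + 1) ⟨k - 1, hkm1⟩ ⟨k + (l : ℕ), hl⟩
          = (1 / R ⟨k - 1, hkm1⟩ ⟨k - 1, hkm1⟩)
            * (0 - ∑ s : Fin (N - k),
                R ⟨k - 1, hkm1⟩ ⟨k + (s : ℕ), by have := s.isLt; omega⟩
                  * G (k + 1) (s : ℕ) l) := by
      intro l hl
      rw [hkrow ⟨k + (l : ℕ), hl⟩, if_neg (show ¬((k - 1 : ℕ) = k + (l : ℕ)) by omega)]
      simp only [IHb']
    -- the p k formula
    have hpk : ∀ c : Fin r, p k 0 c
        = (1 / R ⟨k - 1, hkm1⟩ ⟨k - 1, hkm1⟩)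
          * (((Uk k)ᴴ) 0 c.castSucc
             - ∑ s : Fin (N - k), ∑ l : Fin r,
                 R ⟨k - 1, hkm1⟩ ⟨k + (s : ℕ), by have := s.isLt; omega⟩
                   * G (k + 1) (s : ℕ) l * ((Uk k)ᴴ) (Fin.succ l) c.castSucc) := by
      intro c
      by_cases hcase : N - 2 * r + 1 ≤ k
      · rw [hp1 k hcase hk2 c]
        refine congrArg₂ (· * ·) rfl (congrArg₂ (· - ·) rfl ?_)
        refine Finset.sum_congr rfl fun s _ => Finset.sum_congr rfl fun l _ => ?_
        rw [IHP (s : ℕ) l (by omega) (by have := s.isLt; omega)]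
        simp only [blkA, Matrix.of_apply]
      · rw [hp2 k hk1 (by omega) c]
        refine congrArg₂ (· * ·) rfl (congrArg₂ (· - ·) rfl ?_)
        have IHt' : ∀ (i : Fin (2 * r)) (c : Fin r), t (k + 1) i c = G (k + 1) (i : ℕ) c :=
          fun i c => IHt i c (by omega)
        set F : ℕ → ℂ := fun n =>
          if h : k + n < N then
            ∑ l : Fin r, R ⟨k - 1, hkm1⟩ ⟨k + n, h⟩ * G (k + 1) n l
              * ((Uk k)ᴴ) (Fin.succ l) c.castSucc
          else 0 with hF
        have hL : ∀ τ : Fin (2 * r),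
            (∑ l : Fin r, R ⟨k - 1, hkm1⟩ ⟨k + (τ : ℕ), by have := τ.isLt; omega⟩
              * t (k + 1) τ l * aU k l c) = F (τ : ℕ) := by
          intro τ
          simp only [hF]
          rw [dif_pos (by have := τ.isLt; omega)]
          refine Finset.sum_congr rfl fun l _ => ?_
          rw [IHt' τ l]
          simp only [haU, blkA, Matrix.of_apply]
        have hRr : ∀ s : Fin (N - k),
            (∑ l : Fin r, R ⟨k - 1, hkm1⟩ ⟨k + (s : ℕ), by have := s.isLt; omega⟩
              * G (k + 1) (s : ℕ) l * ((Uk k)ᴴ) (Fin.succ l) c.castSucc) = F (s : ℕ) := by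
          intro s
          simp only [hF]
          rw [dif_pos (by have := s.isLt; omega)]
        calc ∑ τ : Fin (2 * r), ∑ l : Fin r,
              R ⟨k - 1, by omega⟩ ⟨k + (τ : ℕ), by have := τ.isLt; omega⟩
                * t (k + 1) τ l * aU k l c
            = ∑ τ : Fin (2 * r), F (τ : ℕ) := Finset.sum_congr rfl fun τ _ => hL τ
          _ = ∑ n ∈ Finset.range (2 * r), F n := Fin.sum_univ_eq_sum_range F (2 * r)
          _ = ∑ n ∈ Finset.range (N - k), F n := by
              refine Finset.sum_subset (by
                intro x hx
                rw [Finset.mem_range] at hx ⊢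
                omega) (fun x hx hx' => ?_)
              rw [Finset.mem_range] at hx hx'
              simp only [hF]
              by_cases hxN : k + x < N
              · rw [dif_pos hxN]
                refine Finset.sum_eq_zero fun l _ => ?_
                rw [hRband _ _ (show (k - 1) + 2 * r < k + x by omega), zero_mul, zero_mul]
              · rw [dif_neg hxN]
          _ = ∑ s : Fin (N - k), F (s : ℕ) := (Fin.sum_univ_eq_sum_range F (N - k)).symm
          _ = ∑ s : Fin (N - k), ∑ l : Fin r,
                R ⟨k - 1, hkm1⟩ ⟨k + (s : ℕ), by have := s.isLt; omega⟩
                  * G (k + 1) (s : ℕ) l * ((Uk k)ᴴ) (Fin.succ l) c.castSucc :=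
            Finset.sum_congr rfl fun s _ => (hRr s).symm
    have hGzero : ∀ c : Fin r, G k 0 c = p k 0 c := by
      intro c
      simp only [hG]
      rw [dif_pos (show k + 0 ≤ N - r by omega)]
      rw [show k + 0 = k from rfl, aGT_nil r aU (le_refl (k - 1)), Matrix.mul_one]
    -- row k-1 of C k on the block columns equals p k
    have hCkrow0 : ∀ (c : Fin r) (hc : k - 1 + (c : ℕ) < N),
        C k ⟨k - 1, hkm1⟩ ⟨k - 1 + (c : ℕ), hc⟩ = p k 0 c := by
      intro c hc
      rw [hexpand k hk1 hk2 ⟨k - 1, hkm1⟩ c.castSucc _ rfl]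
      rw [hkrow0]
      simp only [hkrowl]
      rw [hpk c]
      have hswap : (∑ s : Fin (N - k), ∑ l : Fin r,
            R ⟨k - 1, hkm1⟩ ⟨k + (s : ℕ), by have := s.isLt; omega⟩
              * G (k + 1) (s : ℕ) l * ((Uk k)ᴴ) (Fin.succ l) c.castSucc)
          = ∑ l : Fin r, (∑ s : Fin (N - k),
              R ⟨k - 1, hkm1⟩ ⟨k + (s : ℕ), by have := s.isLt; omega⟩
                * G (k + 1) (s : ℕ) l) * ((Uk k)ᴴ) (Fin.succ l) c.castSucc := by
        rw [Finset.sum_comm]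
        exact Finset.sum_congr rfl fun l _ => (Finset.sum_mul _ _ _).symm
      rw [hswap, mul_sub, Finset.mul_sum]
      have hterm : ∀ l : Fin r,
          1 / R ⟨k - 1, hkm1⟩ ⟨k - 1, hkm1⟩
              * (0 - ∑ s : Fin (N - k), R ⟨k - 1, hkm1⟩ ⟨k + (s : ℕ), by have := s.isLt; omega⟩
                  * G (k + 1) (s : ℕ) l) * ((Uk k)ᴴ) (Fin.succ l) c.castSucc
            = -(1 / R ⟨k - 1, hkm1⟩ ⟨k - 1, hkm1⟩
              * ((∑ s : Fin (N - k), R ⟨k - 1, hkm1⟩ ⟨k + (s : ℕ), by have := s.isLt; omega⟩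
                  * G (k + 1) (s : ℕ) l) * ((Uk k)ᴴ) (Fin.succ l) c.castSucc)) := by
        intro l; ring
      rw [Finset.sum_congr rfl (fun l _ => hterm l), Finset.sum_neg_distrib, ← sub_eq_add_neg]
    -- assemble Phi k
    have hPagree : ∀ u (c : Fin r), N - 2 * r + 1 ≤ k → k + u ≤ N → P k u c = G k u c := by
      intro u c hklow hkuN
      cases u with
      | zero =>
          rw [hPfirst k hklow hk2 c]
          exact (hGzero c).symm
      | succ u =>
          rw [hPrec k hklow hk2 u c]
          rw [hGrec k u c hk1 hk2 (by omega)]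
          refine Finset.sum_congr rfl fun l _ => ?_
          rw [IHP u l (by omega) (by omega)]
    refine ⟨hPagree, ?_, ?_, ?_⟩
    · -- t-agreement
      intro i c hkle
      rcases i with ⟨iv, hiv⟩
      by_cases hkeq : k = N - 2 * r + 1
      · subst hkeq
        rw [htTop ⟨iv, hiv⟩ c]
        exact hPagree iv c (by omega) (by omega)
      · have hk2r : k ≤ N - 2 * r := by omega
        cases iv with
        | zero =>
            have h := htFirst k hk1 hk2r c
            rw [hGzero c]
            exact h
        | succ iv' =>
            have h := htRec k hk1 hk2r iv' (by omega) c
            rw [hGrec k iv' c hk1 hk2 (by omega)]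
            refine h.trans (Finset.sum_congr rfl fun l _ => ?_)
            rw [IHt ⟨iv', by omega⟩ l (by omega)]
    · -- zero block
      intro i j hi hj
      rw [hCstep k hk1 hk2]
      simp only [hV]
      rw [mul_embed_out _ _ _ _ (show ¬(k - 1 ≤ (j : ℕ) ∧ (j : ℕ) < k + r) by omega)]
      rcases Nat.lt_or_ge (i : ℕ) k with hik | hik
      · rw [show i = ⟨k - 1, hkm1⟩ from Fin.ext (by simp only [fin_val_mk]; omega), hkrow j,
          if_neg (show ¬((k - 1 : ℕ) = (j : ℕ)) by omega)]
        have h0 : ∀ s : Fin (N - k),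
            R ⟨k - 1, hkm1⟩ ⟨k + (s : ℕ), by have := s.isLt; omega⟩
              * C (k + 1) ⟨k + (s : ℕ), by have := s.isLt; omega⟩ j = 0 := by
          intro s
          rw [IHa' _ j (show k ≤ k + (s : ℕ) from Nat.le_add_right _ _) (by omega), mul_zero]
        rw [Finset.sum_congr rfl (fun s _ => h0 s), Finset.sum_const_zero, sub_zero, mul_zero]
      · exact IHa' i j hik (by omega)
    · -- the C k block values
      intro u c hu hc
      cases u with
      | zero =>
          rw [hGzero c]
          exact hCkrow0 c hc
      | succ u =>
          rw [show (⟨k - 1 + (u + 1), hu⟩ : Fin N) = ⟨k + u, by omega⟩ from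
            Fin.ext (by simp only [fin_val_mk]; omega)]
          rw [hexpand k hk1 hk2 ⟨k + u, by omega⟩ c.castSucc _ rfl]
          rw [IHa' ⟨k + u, by omega⟩ ⟨k - 1, by omega⟩
            (show k ≤ k + u from Nat.le_add_right _ _) (show k - 1 < k by omega),
            zero_mul, zero_add]
          rw [hGrec k u c hk1 hk2 (by omega)]
          refine Finset.sum_congr rfl fun l _ => ?_
          rw [IHb' u l (by omega) (by have := l.isLt; omega)]
          simp only [haU, blkA, Matrix.of_apply]
  have main : ∀ d k, k + d = N - r + 1 → 1 ≤ k → Phi k := by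
    intro d
    induction d with
    | zero =>
        intro k hk _
        have : k = N - r + 1 := by omega
        rw [this]
        exact base
    | succ d ih =>
        intro k hkd hk1
        exact step k hk1 (by omega) (ih (k + 1) (by omega) (by omega))
  -- agreement of C 1 with C k' on far columns
  have hCagree : ∀ k', 1 ≤ k' → k' ≤ N - r + 1 → ∀ (i j : Fin N),
      k' - 1 + r ≤ (j : ℕ) → C 1 i j = C k' i j := by
    intro k'
    induction k' with
    | zero => intro h; exact absurd h (by omega)
    | succ n ih =>
        intro _ h2 i j hj
        by_cases hn : n = 0
        · subst hn; rfl
        · rw [ih (by omega) (by omega) i j (by omega)]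
          rw [hCstep n (by omega) (by omega)]
          simp only [hV]
          rw [mul_embed_out _ _ _ _ (show ¬(n - 1 ≤ (j : ℕ) ∧ (j : ℕ) < n + r) by omega)]
  have hPhi1 := main (N - r) 1 (by omega) (by omega)
  simp only [hPhi] at hPhi1
  obtain ⟨-, -, hCa1, hCb1⟩ := hPhi1
  unfold IsLowerGreenGenerators
  refine ⟨?_, ?_, ?_, ?_⟩
  · intro i hi1 hi2 j
    rw [hAinv]
    rw [show (⟨i - 1, by omega⟩ : Fin N) = ⟨1 - 1 + (i - 1), by omega⟩ from
        Fin.ext (by simp only [fin_val_mk]; omega),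
      show (⟨(j : ℕ), by have := j.isLt; omega⟩ : Fin N)
          = ⟨1 - 1 + (j : ℕ), by have := j.isLt; omega⟩ from
        Fin.ext (by simp only [fin_val_mk]; omega)]
    rw [hCb1 (i - 1) j (by omega) (by have := j.isLt; omega)]
    simp only [hG]
    rw [dif_pos (show 1 + (i - 1) ≤ N - r by omega)]
    rw [show 1 + (i - 1) = i by omega]
  · intro i hi1 hi2 s hs1 hs2
    have hPhis := main (N - r + 1 - s) s (by omega) (by omega)
    simp only [hPhi] at hPhis
    obtain ⟨-, -, hCas, hCbs⟩ := hPhis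
    rw [hAinv]
    rw [hCagree (s - 1) (by omega) (by omega) _ _
      (show s - 1 - 1 + r ≤ ((⟨r + s - 2, by omega⟩ : Fin N) : ℕ) from by
        simp only [fin_val_mk]; omega)]
    rw [hexpand (s - 1) (by omega) (by omega) _ (Fin.last r) _
      (show ((⟨r + s - 2, by omega⟩ : Fin N) : ℕ) = s - 1 - 1 + ((Fin.last r) : ℕ) from by
        simp only [fin_val_mk, Fin.val_last]; omega)]
    rw [show s - 1 + 1 = s by omega]
    rw [show (⟨i - 1, by omega⟩ : Fin N) = ⟨s - 1 + (i - s), by omega⟩ from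
      Fin.ext (by simp only [fin_val_mk]; omega)]
    rw [hCas ⟨s - 1 + (i - s), by omega⟩ ⟨s - 1 - 1, by omega⟩
      (show s - 1 ≤ s - 1 + (i - s) from Nat.le_add_right _ _)
      (show s - 1 - 1 < s - 1 by omega), zero_mul, zero_add]
    simp only [hCbs]
    simp only [hG]
    simp only [dif_pos (show s + (i - s) ≤ N - r by omega)]
    simp only [show s + (i - s) = i from by omega]
    conv_rhs => rw [Matrix.mul_apply]
    refine Finset.sum_congr rfl fun l _ => ?_
    simp only [blkQ, Matrix.of_apply]
  · intro tt j
    rw [hAinv]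
    rw [show (⟨N - r + (tt : ℕ), by have := tt.isLt; omega⟩ : Fin N)
        = ⟨1 - 1 + (N - r + (tt : ℕ)), by have := tt.isLt; omega⟩ from
          Fin.ext (by simp only [fin_val_mk]; omega),
      show (⟨(j : ℕ), by have := j.isLt; omega⟩ : Fin N)
          = ⟨1 - 1 + (j : ℕ), by have := j.isLt; omega⟩ from
          Fin.ext (by simp only [fin_val_mk]; omega)]
    rw [hCb1 (N - r + (tt : ℕ)) j (by have := tt.isLt; omega) (by have := j.isLt; omega)]
    simp only [hG]
    rw [dif_neg (show ¬(1 + (N - r + (tt : ℕ)) ≤ N - r) by omega),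
      dif_pos (show 1 + (N - r + (tt : ℕ)) ≤ N by have := tt.isLt; omega)]
    rw [show (⟨1 + (N - r + (tt : ℕ)) - (N - r + 1), by omega⟩ : Fin r) = tt from
      Fin.ext (by simp only [fin_val_mk]; have := tt.isLt; omega)]
  · intro tt s hs1 hs2
    have hPhis := main (N - r + 1 - s) s (by omega) (by omega)
    simp only [hPhi] at hPhis
    obtain ⟨-, -, hCas, hCbs⟩ := hPhis
    rw [hAinv]
    rw [hCagree (s - 1) (by omega) (by omega) _ _
      (show s - 1 - 1 + r ≤ ((⟨r + s - 2, by omega⟩ : Fin N) : ℕ) from by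
        simp only [fin_val_mk]; omega)]
    rw [hexpand (s - 1) (by omega) (by omega) _ (Fin.last r) _
      (show ((⟨r + s - 2, by omega⟩ : Fin N) : ℕ) = s - 1 - 1 + ((Fin.last r) : ℕ) from by
        simp only [fin_val_mk, Fin.val_last]; omega)]
    rw [show s - 1 + 1 = s by omega]
    rw [show (⟨N - r + (tt : ℕ), by have := tt.isLt; omega⟩ : Fin N)
        = ⟨s - 1 + (N - r + (tt : ℕ) - (s - 1)), by have := tt.isLt; omega⟩ from
      Fin.ext (by simp only [fin_val_mk]; have := tt.isLt; omega)]
    rw [hCas ⟨s - 1 + (N - r + (tt : ℕ) - (s - 1)), by have := tt.isLt; omega⟩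
      ⟨s - 1 - 1, by omega⟩
      (show s - 1 ≤ s - 1 + (N - r + (tt : ℕ) - (s - 1)) from Nat.le_add_right _ _)
      (show s - 1 - 1 < s - 1 by omega), zero_mul, zero_add]
    simp only [hCbs]
    simp only [hG]
    simp only [dif_neg (show ¬(s + (N - r + (tt : ℕ) - (s - 1)) ≤ N - r) by omega),
      dif_pos (show s + (N - r + (tt : ℕ) - (s - 1)) ≤ N by have := tt.isLt; omega)]
    rw [show (⟨s + (N - r + (tt : ℕ) - (s - 1)) - (N - r + 1), by omega⟩ : Fin r) = tt from
      Fin.ext (by simp only [fin_val_mk]; have := tt.isLt; omega)]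
    conv_rhs => rw [Matrix.mul_apply]
    refine Finset.sum_congr rfl fun l _ => ?_
    simp only [blkQ, Matrix.of_apply]
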